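/- Every nonzero vector v ∈ F_4^n is contained in exactly L(n,t) = ∏_{r=1}^{t-1} (2^{2(n-r)} - 1)/(2^r - 1) additive self-orthogonal codes of size 2^t over F_4 (with respect to the trace inner product). -/

import Mathlib

/-- The trace inner product `v * w = Tr_{F₄/F₂}(Σᵢ vᵢ conj(wᵢ))` on `F₄ⁿ`,
with `conj x = x²` and `Tr x = x + x²` (valued in the prime subfield of `F₄`). -/
noncomputable def traceIP {n : ℕ} (v w : Fin n → GaloisField 2 2) : GaloisField 2 2 :=
  (∑ i, v i * (w i)^2) + (∑ i, v i * (w i)^2)^2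

/-- An additive (`F₂`-linear) code `C ⊆ F₄ⁿ` is self-orthogonal if `v * w = 0`
for all `v, w ∈ C`. -/
def IsSelfOrthogonal {n : ℕ} (C : Submodule (ZMod 2) (Fin n → GaloisField 2 2)) : Prop :=
  ∀ v ∈ C, ∀ w ∈ C, traceIP v w = 0

/-!
The trace form is an alternating nondegenerate `𝔽₂`-bilinear form on `𝔽₄ⁿ ≅ 𝔽₂²ⁿ`, and the
self-orthogonal codes are its totally isotropic subspaces. Let `N t` count those of dimension `t`
through `v`, and double count the pairs `C < D` of dimensions `t` and `t + 1`. A given `D` contains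
`2 ^ t - 1` hyperplanes through `v`, all isotropic. A given `C` lies in `2 ^ (2n - 2t) - 1` of the
`D`: these are the `C + ⟨w⟩` with `w ∈ C^⊥ \ C`, and each arises from the `2 ^ t` vectors of
`D \ C`. Hence `N (t + 1) * (2 ^ t - 1) = N t * (2 ^ (2 (n - t)) - 1)`, and `N 1 = 1`.
-/

open Module Finset
open LinearMap (BilinForm)

theorem Submodule.sup_span_singleton_eq_of_finrank_eq_succ {K V : Type*} [DivisionRing K]
    [AddCommGroup V] [Module K V] [FiniteDimensional K V] {C D : Submodule K V} (hCD : C ≤ D)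
    (hD : finrank K D = finrank K C + 1) {w : V} (hwD : w ∈ D) (hwC : w ∉ C) :
    C ⊔ span K {w} = D :=
  eq_of_le_of_finrank_eq (sup_le hCD ((span_singleton_le_iff_mem w D).2 hwD))
    (by rw [finrank_sup_span_singleton hwC, hD])

theorem Module.Dual.exists_ker_eq {K V : Type*} [Field K] [AddCommGroup V] [Module K V]
    [FiniteDimensional K V] {H : Submodule K V} (hH : finrank K H + 1 = finrank K V) :
    ∃ f : Dual K V, LinearMap.ker f = H := by
  have hQ : finrank K (V ⧸ H) = finrank K K := by
    have := H.finrank_quotient_add_finrank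
    rw [finrank_self]
    omega
  refine ⟨(LinearEquiv.ofFinrankEq _ _ hQ).toLinearMap ∘ₗ H.mkQ, ?_⟩
  rw [LinearMap.ker_comp, LinearEquiv.ker, Submodule.comap_bot, Submodule.ker_mkQ]

section Hyperplanes

variable {W : Type*} [AddCommGroup W] [Module (ZMod 2) W]

theorem Module.Dual.eq_of_ker_eq {f g : Dual (ZMod 2) W}
    (h : LinearMap.ker f = LinearMap.ker g) : f = g := by
  ext x
  by_cases hx : f x = 0
  · rw [hx, eq_comm, ← LinearMap.mem_ker, ← h, LinearMap.mem_ker, hx]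
  · have hgx : g x ≠ 0 := by rwa [ne_eq, ← LinearMap.mem_ker, ← h, LinearMap.mem_ker]
    rw [Fin.eq_one_of_ne_zero _ hx, Fin.eq_one_of_ne_zero _ hgx]

variable [Finite W]

theorem natCard_ne_zero_eq_two_pow_finrank_sub_one :
    Nat.card {x : W // x ≠ 0} = 2 ^ finrank (ZMod 2) W - 1 := by
  classical
  have := Nat.card_congr (Equiv.optionSubtypeNe (0 : W))
  rw [Finite.card_option, natCard_eq_pow_finrank (K := ZMod 2) (V := W), Nat.card_zmod] at this
  omega

/-- Over `𝔽₂` a hyperplane is the kernel of exactly one functional, so the hyperplanes through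
`w` correspond to the nonzero vectors of the annihilator of `w`. -/
theorem natCard_hyperplanes_containing {w : W} (hw : w ≠ 0) :
    Nat.card {H : Submodule (ZMod 2) W //
        finrank (ZMod 2) H + 1 = finrank (ZMod 2) W ∧ w ∈ H} =
      2 ^ (finrank (ZMod 2) W - 1) - 1 := by
  set A := (Submodule.span (ZMod 2) {w}).dualAnnihilator
  have mem_A (f : Dual (ZMod 2) W) : f ∈ A ↔ w ∈ LinearMap.ker f := by
    rw [Submodule.mem_dualAnnihilator, ← Submodule.span_singleton_le_iff_mem, SetLike.le_def]
    rfl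
  have finrank_A : finrank (ZMod 2) A = finrank (ZMod 2) W - 1 := by
    have := Subspace.finrank_add_finrank_dualAnnihilator_eq (Submodule.span (ZMod 2) {w})
    rw [finrank_span_singleton hw] at this
    change 1 + finrank (ZMod 2) A = _ at this
    omega
  have : Finite A := Module.finite_of_finite (ZMod 2)
  rw [← finrank_A, ← natCard_ne_zero_eq_two_pow_finrank_sub_one]
  symm
  refine Nat.card_eq_of_bijective
    (fun f => ⟨LinearMap.ker (f : Dual (ZMod 2) W), ?_, (mem_A f).1 f.1.2⟩) ⟨?_, ?_⟩
  · exact Dual.finrank_ker_add_one_of_ne_zero (by simpa using f.2)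
  · intro f g hfg
    have := Dual.eq_of_ker_eq (congrArg Subtype.val hfg)
    exact Subtype.ext (Subtype.ext this)
  · rintro ⟨H, hH, hwH⟩
    obtain ⟨f, hf⟩ := Dual.exists_ker_eq hH
    have hf0 : f ≠ 0 := by
      rintro rfl
      rw [LinearMap.ker_zero] at hf
      rw [← hf, finrank_top] at hH
      omega
    exact ⟨⟨⟨f, (mem_A f).2 (hf ▸ hwH)⟩, by simpa using hf0⟩, Subtype.ext hf⟩

end Hyperplanes

section Subspaces

open scoped Classical

variable {M : Type*} [AddCommGroup M] [Module (ZMod 2) M] [Fintype M]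

theorem card_filter_mem (S : Submodule (ZMod 2) M) :
    #{x | x ∈ S} = 2 ^ finrank (ZMod 2) S := by
  rw [← Fintype.card_subtype, ← Nat.card_eq_fintype_card,
    natCard_eq_pow_finrank (K := ZMod 2) (V := S), Nat.card_zmod]

theorem card_filter_mem_and_notMem {C U : Submodule (ZMod 2) M} (hCU : C ≤ U) :
    #{x | x ∈ U ∧ x ∉ C} = 2 ^ finrank (ZMod 2) U - 2 ^ finrank (ZMod 2) C := by
  rw [filter_and_not, card_sdiff_of_subset (monotone_filter_right univ fun x _ => @hCU x),
    card_filter_mem, card_filter_mem]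

theorem card_hyperplanes_le_containing {D : Submodule (ZMod 2) M} {v : M} (hvD : v ∈ D)
    (hv : v ≠ 0) :
    #{C | C ≤ D ∧ finrank (ZMod 2) C + 1 = finrank (ZMod 2) D ∧ v ∈ C} =
      2 ^ (finrank (ZMod 2) D - 1) - 1 := by
  rw [← natCard_hyperplanes_containing (w := (⟨v, hvD⟩ : D)) (by simpa using hv),
    ← Fintype.card_subtype, ← Nat.card_eq_fintype_card]
  symm
  refine Nat.card_eq_of_bijective (fun H => ⟨H.1.map D.subtype, ?_⟩) ⟨?_, ?_⟩
  · exact ⟨Submodule.map_subtype_le D _, by rw [Submodule.finrank_map_subtype_eq]; exact H.2.1,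
      Submodule.mem_map.2 ⟨_, H.2.2, rfl⟩⟩
  · intro H H' h
    exact Subtype.ext
      (Submodule.map_injective_of_injective D.injective_subtype (congrArg Subtype.val h))
  · rintro ⟨C, hCD, hC, hvC⟩
    have hmap : (C.comap D.subtype).map D.subtype = C := by
      rw [Submodule.map_comap_subtype, inf_eq_right.2 hCD]
    refine ⟨⟨C.comap D.subtype, ?_, hvC⟩, Subtype.ext hmap⟩
    rwa [← Submodule.finrank_map_subtype_eq, hmap]

/-- `w ↦ C ⊔ ⟨w⟩` maps `U \ C` onto the subspaces between `C` and `U` covering `C`, and the fibre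
over `D` is `D \ C`, of size `2 ^ (t + 1) - 2 ^ t = 2 ^ t`. -/
theorem card_covers_le {C U : Submodule (ZMod 2) M} (hCU : C ≤ U) :
    #{D | C ≤ D ∧ D ≤ U ∧ finrank (ZMod 2) D = finrank (ZMod 2) C + 1} =
      2 ^ (finrank (ZMod 2) U - finrank (ZMod 2) C) - 1 := by
  set t := finrank (ZMod 2) C with ht
  have hmaps : Set.MapsTo (fun w => C ⊔ Submodule.span (ZMod 2) {w})
      ({x | x ∈ U ∧ x ∉ C} : Finset M)
      ({D | C ≤ D ∧ D ≤ U ∧ finrank (ZMod 2) D = t + 1} : Finset _) := by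
    intro w hw
    simp only [coe_filter, mem_univ, true_and, Set.mem_ofPred_eq] at hw ⊢
    exact ⟨le_sup_left, sup_le hCU ((Submodule.span_singleton_le_iff_mem w U).2 hw.1),
      Submodule.finrank_sup_span_singleton hw.2⟩
  have hfiber (D : Submodule (ZMod 2) M)
      (hD : D ∈ ({D | C ≤ D ∧ D ≤ U ∧ finrank (ZMod 2) D = t + 1} : Finset _)) :
      #{w ∈ ({x | x ∈ U ∧ x ∉ C} : Finset M) | C ⊔ Submodule.span (ZMod 2) {w} = D} = 2 ^ t := by
    obtain ⟨-, hCD, hDU, hD⟩ := mem_filter.1 hD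
    have : {w ∈ ({x | x ∈ U ∧ x ∉ C} : Finset M) | C ⊔ Submodule.span (ZMod 2) {w} = D} =
        ({x | x ∈ D ∧ x ∉ C} : Finset M) := by
      ext w
      simp only [mem_filter, mem_univ, true_and]
      constructor
      · rintro ⟨⟨-, hwC⟩, rfl⟩
        exact ⟨Submodule.mem_sup_right (Submodule.mem_span_singleton_self w), hwC⟩
      · rintro ⟨hwD, hwC⟩
        exact ⟨⟨hDU hwD, hwC⟩, Submodule.sup_span_singleton_eq_of_finrank_eq_succ hCD hD hwD hwC⟩
    rw [this, card_filter_mem_and_notMem hCD, hD, ← ht, pow_succ]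
    omega
  have hcount := card_eq_sum_card_fiberwise hmaps
  rw [sum_congr rfl hfiber, sum_const, smul_eq_mul, card_filter_mem_and_notMem hCU, ← ht] at hcount
  have hpow : 2 ^ finrank (ZMod 2) U = 2 ^ (finrank (ZMod 2) U - t) * 2 ^ t := by
    rw [← pow_add, Nat.sub_add_cancel (Submodule.finrank_mono hCU)]
  rw [hpow, ← Nat.sub_one_mul] at hcount
  exact (Nat.eq_of_mul_eq_mul_right (Nat.two_pow_pos t) hcount).symm

end Subspaces

section Isotropic

variable {M : Type*} [AddCommGroup M] [Module (ZMod 2) M] {B : BilinForm (ZMod 2) M}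

theorem sup_span_singleton_le_orthogonal (hB : B.IsAlt) {C : Submodule (ZMod 2) M}
    (hC : C ≤ B.orthogonal C) {w : M} (hw : w ∈ B.orthogonal C) :
    C ⊔ Submodule.span (ZMod 2) {w} ≤ B.orthogonal (C ⊔ Submodule.span (ZMod 2) {w}) := by
  intro y hy
  rw [BilinForm.mem_orthogonal_iff]
  intro x hx
  obtain ⟨c, hc, _, hz, rfl⟩ := Submodule.mem_sup.1 hx
  obtain ⟨c', hc', _, hz', rfl⟩ := Submodule.mem_sup.1 hy
  obtain ⟨a, rfl⟩ := Submodule.mem_span_singleton.1 hz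
  obtain ⟨b, rfl⟩ := Submodule.mem_span_singleton.1 hz'
  have hcc' : B c c' = 0 := BilinForm.mem_orthogonal_iff.1 (hC hc') c hc
  have hcw : B c w = 0 := BilinForm.mem_orthogonal_iff.1 hw c hc
  have hwc' : B w c' = 0 := hB.isRefl _ _ (BilinForm.mem_orthogonal_iff.1 hw c' hc')
  simp [hcc', hcw, hwc', hB.self_eq_zero w]

open scoped Classical

variable [Fintype M]

variable (B) in
noncomputable def isotropicThrough (v : M) (t : ℕ) : Finset (Submodule (ZMod 2) M) :=
  {C | C ≤ B.orthogonal C ∧ finrank (ZMod 2) C = t ∧ v ∈ C}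

theorem mem_isotropicThrough {v : M} {t : ℕ} {C : Submodule (ZMod 2) M} :
    C ∈ isotropicThrough B v t ↔ C ≤ B.orthogonal C ∧ finrank (ZMod 2) C = t ∧ v ∈ C := by
  simp [isotropicThrough]

theorem isotropicThrough_one (hB : B.IsAlt) {v : M} (hv : v ≠ 0) :
    isotropicThrough B v 1 = {Submodule.span (ZMod 2) {v}} := by
  ext C
  rw [mem_isotropicThrough, mem_singleton]
  constructor
  · rintro ⟨-, hC, hvC⟩
    refine (Submodule.eq_of_le_of_finrank_eq ?_ ?_).symm
    · exact (Submodule.span_singleton_le_iff_mem v C).2 hvC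
    · rw [finrank_span_singleton hv, hC]
  · rintro rfl
    refine ⟨?_, finrank_span_singleton hv, Submodule.mem_span_singleton_self v⟩
    simpa using sup_span_singleton_le_orthogonal hB (C := ⊥) bot_le (w := v) (by simp)

theorem card_isotropicThrough_below {v : M} (hv : v ≠ 0) {t : ℕ} {D : Submodule (ZMod 2) M}
    (hD : D ∈ isotropicThrough B v (t + 1)) :
    #{C ∈ isotropicThrough B v t | C ≤ D} = 2 ^ t - 1 := by
  obtain ⟨hDD, hD, hvD⟩ := mem_isotropicThrough.1 hD
  have : {C ∈ isotropicThrough B v t | C ≤ D} =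
      ({C | C ≤ D ∧ finrank (ZMod 2) C + 1 = finrank (ZMod 2) D ∧ v ∈ C} : Finset _) := by
    ext C
    simp only [mem_filter, mem_isotropicThrough, mem_univ, true_and, hD]
    constructor
    · rintro ⟨⟨-, hC, hvC⟩, hCD⟩
      exact ⟨hCD, by rw [hC], hvC⟩
    · rintro ⟨hCD, hC, hvC⟩
      exact ⟨⟨hCD.trans (hDD.trans (BilinForm.orthogonal_le hCD)), by omega, hvC⟩, hCD⟩
  rw [this, card_hyperplanes_le_containing hvD hv, hD, Nat.add_sub_cancel]

theorem card_isotropicThrough_above (hB : B.IsAlt) (hBn : B.Nondegenerate) {v : M} {t : ℕ}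
    {C : Submodule (ZMod 2) M} (hC : C ∈ isotropicThrough B v t) :
    #{D ∈ isotropicThrough B v (t + 1) | C ≤ D} = 2 ^ (finrank (ZMod 2) M - 2 * t) - 1 := by
  obtain ⟨hCC, hC, hvC⟩ := mem_isotropicThrough.1 hC
  have : {D ∈ isotropicThrough B v (t + 1) | C ≤ D} = ({D | C ≤ D ∧ D ≤ B.orthogonal C ∧
      finrank (ZMod 2) D = finrank (ZMod 2) C + 1} : Finset _) := by
    ext D
    simp only [mem_filter, mem_isotropicThrough, mem_univ, true_and, hC]
    constructor
    · rintro ⟨⟨hDD, hD, -⟩, hCD⟩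
      exact ⟨hCD, hDD.trans (BilinForm.orthogonal_le hCD), hD⟩
    · rintro ⟨hCD, hDC, hD⟩
      obtain ⟨w, hwD, hwC⟩ := SetLike.exists_of_lt (lt_of_le_of_ne hCD (by rintro rfl; omega))
      have hCw := Submodule.sup_span_singleton_eq_of_finrank_eq_succ hCD (by rw [hD, hC]) hwD hwC
      exact ⟨⟨hCw ▸ sup_span_singleton_le_orthogonal hB hCC (hDC hwD), hD, hCD hvC⟩, hCD⟩
  rw [this, card_covers_le hCC, BilinForm.finrank_orthogonal hBn, hC]
  congr 2
  omega

theorem card_isotropicThrough_succ_mul (hB : B.IsAlt) (hBn : B.Nondegenerate) {v : M}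
    (hv : v ≠ 0) (t : ℕ) :
    #(isotropicThrough B v (t + 1)) * (2 ^ t - 1) =
      #(isotropicThrough B v t) * (2 ^ (finrank (ZMod 2) M - 2 * t) - 1) :=
  (card_mul_eq_card_mul (· ≤ ·) (fun _ hC => card_isotropicThrough_above hB hBn hC)
    (fun _ hD => card_isotropicThrough_below hv hD)).symm

theorem card_isotropicThrough_eq_prod (hB : B.IsAlt) (hBn : B.Nondegenerate) {n : ℕ}
    (hM : finrank (ZMod 2) M = 2 * n) {v : M} (hv : v ≠ 0) {t : ℕ} (ht : 1 ≤ t) :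
    (#(isotropicThrough B v t) : ℚ) =
      ∏ r ∈ Ico 1 t, ((2 : ℚ) ^ (2 * (n - r)) - 1) / ((2 : ℚ) ^ r - 1) := by
  induction t, ht using Nat.le_induction with
  | base => simp [isotropicThrough_one hB hv]
  | succ t ht ih =>
    have hrec := card_isotropicThrough_succ_mul hB hBn hv t
    rw [hM, show 2 * n - 2 * t = 2 * (n - t) by omega] at hrec
    have hrecℚ := congrArg (Nat.cast : ℕ → ℚ) hrec
    push_cast [Nat.one_le_two_pow] at hrecℚ
    have h2t : (2 : ℚ) ^ t - 1 ≠ 0 := by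
      have : (2 : ℚ) ≤ 2 ^ t := by simpa using pow_le_pow_right₀ (by norm_num : (1 : ℚ) ≤ 2) ht
      linarith
    rw [prod_Ico_succ_top ht, ← ih, ← mul_div_assoc, eq_div_iff h2t, hrecℚ]

end Isotropic

section TraceForm

local notation "𝔽₄" => GaloisField 2 2

theorem galoisField_two_two_pow_four (x : 𝔽₄) : x ^ 4 = x := by
  have := Fintype.ofFinite 𝔽₄
  have hcard : Fintype.card 𝔽₄ = 2 ^ 2 := by
    rw [← Nat.card_eq_fintype_card, GaloisField.card 2 2 two_ne_zero]
  simpa [hcard] using FiniteField.pow_card x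

theorem galoisField_two_two_algebraMap_trace (x : 𝔽₄) :
    algebraMap (ZMod 2) 𝔽₄ (Algebra.trace (ZMod 2) 𝔽₄ x) = x + x ^ 2 := by
  rw [FiniteField.algebraMap_trace_eq_sum_pow, GaloisField.finrank 2 two_ne_zero, Nat.card_zmod]
  simp [sum_range_succ]

noncomputable def traceBilinForm (n : ℕ) : BilinForm (ZMod 2) (Fin n → 𝔽₄) :=
  LinearMap.mk₂ (ZMod 2) (fun v w => Algebra.trace (ZMod 2) 𝔽₄ (∑ i, v i * w i ^ 2))
    (fun _ _ _ => by simp [add_mul, sum_add_distrib])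
    (fun _ _ _ => by simp [← smul_sum])
    (fun _ _ _ => by simp [CharTwo.add_sq, mul_add, sum_add_distrib])
    (fun _ _ _ => by simp [smul_pow, ZMod.pow_card, ← smul_sum])

variable {n : ℕ}

theorem algebraMap_traceBilinForm (v w : Fin n → 𝔽₄) :
    algebraMap (ZMod 2) 𝔽₄ (traceBilinForm n v w) = traceIP v w :=
  galoisField_two_two_algebraMap_trace _

theorem traceBilinForm_eq_zero_iff {v w : Fin n → 𝔽₄} :
    traceBilinForm n v w = 0 ↔ traceIP v w = 0 := by
  rw [← algebraMap_traceBilinForm, map_eq_zero_iff _ (FaithfulSMul.algebraMap_injective _ _)]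

theorem isSelfOrthogonal_iff_le_orthogonal (C : Submodule (ZMod 2) (Fin n → 𝔽₄)) :
    IsSelfOrthogonal C ↔ C ≤ (traceBilinForm n).orthogonal C := by
  simp only [IsSelfOrthogonal, SetLike.le_def, BilinForm.mem_orthogonal_iff,
    traceBilinForm_eq_zero_iff]
  exact ⟨fun h y hy x hx => h x hx y hy, fun h x hx y hy => h hy x hx⟩

theorem traceBilinForm_isAlt : (traceBilinForm n).IsAlt := by
  intro v
  rw [traceBilinForm_eq_zero_iff, traceIP]
  have hsq : (∑ i, v i * v i ^ 2) ^ 2 = ∑ i, v i * v i ^ 2 := by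
    rw [sum_pow_char]
    refine sum_congr rfl fun i _ => ?_
    calc (v i * v i ^ 2) ^ 2 = v i ^ 4 * v i ^ 2 := by ring
      _ = v i * v i ^ 2 := by rw [galoisField_two_two_pow_four]
  rw [hsq, CharTwo.add_self_eq_zero]

theorem traceBilinForm_nondegenerate : (traceBilinForm n).Nondegenerate := by
  refine (LinearMap.IsRefl.nondegenerate_iff_separatingRight traceBilinForm_isAlt.isRefl).2 ?_
  intro w hw
  by_contra hw0
  obtain ⟨i, hi⟩ := Function.ne_iff.1 hw0
  obtain ⟨y, hy⟩ := Algebra.trace_surjective (ZMod 2) 𝔽₄ 1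
  have hone : traceBilinForm n (Pi.single i (y / w i ^ 2)) w = 1 := by
    simp only [traceBilinForm, LinearMap.mk₂_apply]
    rw [sum_eq_single i (fun j _ hj => by simp [hj]) (by simp), Pi.single_eq_same,
      div_mul_cancel₀ _ (pow_ne_zero 2 hi), hy]
  exact one_ne_zero (hone ▸ hw _)

theorem finrank_fin_fun_galoisField_two_two : finrank (ZMod 2) (Fin n → 𝔽₄) = 2 * n := by
  rw [finrank_pi_fintype]
  simp [GaloisField.finrank 2 two_ne_zero, mul_comm]

theorem natCard_selfOrthogonal_eq_card_isotropicThrough [Fintype 𝔽₄] (v : Fin n → 𝔽₄) (t : ℕ) :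
    Nat.card {C : Submodule (ZMod 2) (Fin n → 𝔽₄) //
      IsSelfOrthogonal C ∧ Nat.card C = 2 ^ t ∧ v ∈ C} =
      #(isotropicThrough (traceBilinForm n) v t) := by
  classical
  rw [Nat.card_eq_fintype_card, Fintype.card_subtype]
  congr 1
  ext C
  rw [mem_filter, mem_isotropicThrough, isSelfOrthogonal_iff_le_orthogonal,
    natCard_eq_pow_finrank (K := ZMod 2), Nat.card_zmod, Nat.pow_right_inj one_lt_two]
  simp

end TraceForm

theorem count_self_orthogonal_codes_containing_vector (n t : ℕ) (ht1 : 1 ≤ t)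
    (v : Fin n → GaloisField 2 2) (hv : v ≠ 0) :
    (Nat.card {C : Submodule (ZMod 2) (Fin n → GaloisField 2 2) //
        IsSelfOrthogonal C ∧ Nat.card C = 2^t ∧ v ∈ C} : ℚ)
      = ∏ r ∈ Finset.Ico 1 t, ((2:ℚ)^(2*(n-r)) - 1) / ((2:ℚ)^r - 1) := by
  have := Fintype.ofFinite (GaloisField 2 2)
  rw [natCard_selfOrthogonal_eq_card_isotropicThrough]
  exact card_isotropicThrough_eq_prod traceBilinForm_isAlt traceBilinForm_nondegenerate
    finrank_fin_fun_galoisField_two_two hv ht1
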